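/- Let n be a positive integer, B a symmetric positive-definite n×n real matrix, and g ∈ ℝⁿ with g ≠ 0. Define p(σ) = -(B + σI)⁻¹g for σ ≥ 0. Then the function σ ↦ ‖p(σ)‖₂ is strictly decreasing on [0, ∞); equivalently, the function φ(σ) = 1/‖p(σ)‖₂ - 1/δ is strictly increasing on [0, ∞) for any fixed δ > 0. -/

import Mathlib

open Matrix

/-- `p(σ) = -(B + σI)⁻¹ g`, the solution of the shifted system `(B + σI)p = -g`. -/
noncomputable def psig {n : ℕ} (B : Matrix (Fin n) (Fin n) ℝ)
    (g : EuclideanSpace ℝ (Fin n)) (σ : ℝ) : EuclideanSpace ℝ (Fin n) :=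
  WithLp.toLp 2 (-((B + σ • 1)⁻¹.mulVec g))

/-!
Fix `σ < τ` and put `A = B + σI`, `t = τ - σ`, `q = (A + tI)⁻¹g`. The resolvent identity
gives `A⁻¹g = q + t A⁻¹q`, hence
`‖p(σ)‖² = ‖q‖² + 2t⟨q, A⁻¹q⟩ + t²‖A⁻¹q‖² > ‖q‖² = ‖p(τ)‖²`,
because `A⁻¹` is positive definite and `q ≠ 0`.
-/

namespace Matrix

variable {ι : Type*} [DecidableEq ι]

lemma PosDef.add_smul_one {A : Matrix ι ι ℝ} (hA : A.PosDef) {t : ℝ} (ht : 0 ≤ t) :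
    (A + t • 1).PosDef :=
  hA.add_posSemidef (PosSemidef.one.smul ht)

variable [Fintype ι]

section CommRing

variable {R : Type*} [CommRing R] {A : Matrix ι ι R}

lemma mulVec_inv_mulVec (hA : IsUnit A.det) (v : ι → R) : A *ᵥ (A⁻¹ *ᵥ v) = v := by
  rw [mulVec_mulVec, mul_nonsing_inv _ hA, one_mulVec]

lemma inv_mulVec_mulVec (hA : IsUnit A.det) (v : ι → R) : A⁻¹ *ᵥ (A *ᵥ v) = v := by
  rw [mulVec_mulVec, nonsing_inv_mul _ hA, one_mulVec]

lemma inv_mulVec_ne_zero (hA : IsUnit A.det) {v : ι → R} (hv : v ≠ 0) : A⁻¹ *ᵥ v ≠ 0 :=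
  fun h ↦ hv (by rw [← mulVec_inv_mulVec hA v, h, mulVec_zero])

lemma inv_mulVec_eq_inv_add_smul_one_mulVec_add (hA : IsUnit A.det) {t : R}
    (hAt : IsUnit (A + t • 1).det) (v : ι → R) :
    A⁻¹ *ᵥ v = (A + t • 1)⁻¹ *ᵥ v + t • (A⁻¹ *ᵥ ((A + t • 1)⁻¹ *ᵥ v)) := by
  conv_lhs => rw [← mulVec_inv_mulVec hAt v]
  rw [add_mulVec, smul_mulVec, one_mulVec, mulVec_add, inv_mulVec_mulVec hA, mulVec_smul]

end CommRing

variable {A : Matrix ι ι ℝ}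

lemma PosDef.isUnit_det (hA : A.PosDef) : IsUnit A.det :=
  (isUnit_iff_isUnit_det A).mp hA.isUnit

lemma PosDef.inv_add_smul_one_mulVec_dotProduct_self_lt (hA : A.PosDef) {t : ℝ} (ht : 0 < t)
    {v : ι → ℝ} (hv : v ≠ 0) :
    ((A + t • 1)⁻¹ *ᵥ v) ⬝ᵥ ((A + t • 1)⁻¹ *ᵥ v) < (A⁻¹ *ᵥ v) ⬝ᵥ (A⁻¹ *ᵥ v) := by
  have hAt := (hA.add_smul_one ht.le).isUnit_det
  rw [inv_mulVec_eq_inv_add_smul_one_mulVec_add hA.isUnit_det hAt]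
  have hq := inv_mulVec_ne_zero hAt hv
  set q := (A + t • 1)⁻¹ *ᵥ v
  have hqAq : 0 < q ⬝ᵥ (A⁻¹ *ᵥ q) := by simpa using hA.inv.dotProduct_mulVec_pos hq
  have hAq : 0 ≤ (A⁻¹ *ᵥ q) ⬝ᵥ (A⁻¹ *ᵥ q) := by
    simpa using dotProduct_star_self_nonneg (A⁻¹ *ᵥ q)
  have expand : (q + t • (A⁻¹ *ᵥ q)) ⬝ᵥ (q + t • (A⁻¹ *ᵥ q)) =
      q ⬝ᵥ q + 2 * t * (q ⬝ᵥ (A⁻¹ *ᵥ q)) + t ^ 2 * ((A⁻¹ *ᵥ q) ⬝ᵥ (A⁻¹ *ᵥ q)) := by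
    simp only [add_dotProduct, dotProduct_add, smul_dotProduct, dotProduct_smul,
      dotProduct_comm (A⁻¹ *ᵥ q) q, smul_eq_mul]
    ring
  rw [expand]
  nlinarith

lemma PosDef.strictAntiOn_inv_add_smul_one_mulVec_dotProduct_self (hA : A.PosDef)
    {v : ι → ℝ} (hv : v ≠ 0) :
    StrictAntiOn (fun σ : ℝ ↦ ((A + σ • 1)⁻¹ *ᵥ v) ⬝ᵥ ((A + σ • 1)⁻¹ *ᵥ v)) (Set.Ici 0) := by
  intro σ hσ τ _ hστ
  have h := (hA.add_smul_one hσ).inv_add_smul_one_mulVec_dotProduct_self_lt (sub_pos.2 hστ) hv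
  rwa [add_assoc, ← add_smul, add_sub_cancel] at h

end Matrix

lemma norm_psig {n : ℕ} (B : Matrix (Fin n) (Fin n) ℝ) (g : EuclideanSpace ℝ (Fin n)) (σ : ℝ) :
    ‖psig B g σ‖ = √(((B + σ • 1)⁻¹ *ᵥ g) ⬝ᵥ ((B + σ • 1)⁻¹ *ᵥ g)) := by
  rw [psig, WithLp.toLp_neg, norm_neg, EuclideanSpace.norm_eq]
  simp [dotProduct, sq]

theorem mss_stmt6 (n : ℕ)
    (B : Matrix (Fin n) (Fin n) ℝ) (hB : B.PosDef)
    (g : EuclideanSpace ℝ (Fin n)) (hg : g ≠ 0) :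
    StrictAntiOn (fun σ : ℝ => ‖psig B g σ‖) (Set.Ici 0) ∧
    ∀ δ : ℝ, 0 < δ →
      StrictMonoOn (fun σ : ℝ => 1 / ‖psig B g σ‖ - 1 / δ) (Set.Ici 0) := by
  have hg' : (g : Fin n → ℝ) ≠ 0 := fun h ↦ hg ((WithLp.ofLp_eq_zero 2).mp h)
  have hdot := hB.strictAntiOn_inv_add_smul_one_mulVec_dotProduct_self hg'
  have hnorm : StrictAntiOn (fun σ : ℝ => ‖psig B g σ‖) (Set.Ici 0) := by
    intro σ hσ τ hτ hστ
    simp only [norm_psig]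
    exact Real.sqrt_lt_sqrt (dotProduct_self_star_nonneg _) (hdot hσ hτ hστ)
  refine ⟨hnorm, fun δ _ σ hσ τ hτ hστ ↦ sub_lt_sub_right ?_ _⟩
  have hpos : 0 < ‖psig B g τ‖ :=
    norm_pos_iff.2 (by simpa [psig] using inv_mulVec_ne_zero (hB.add_smul_one hτ).isUnit_det hg')
  exact one_div_lt_one_div_of_lt hpos (hnorm hσ hτ hστ)
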